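/- arXiv:1111.5473 — 3 statements merged into one kernel-verified Lean document; each statement's English description precedes it below -/
import Mathlib

section
/- (Decomposition Theorem, feasibility form.) Let y ∈ Las_t(K), let S ⊆ [n] be a subset of variables, and let k < t be such that every I ⊆ S for which K ∩ {x : x_i = 1 for all i ∈ I} ≠ ∅ satisfies |I| ≤ k. Then there exist finitely many vectors z^{(1)}, …, z^{(N)} ∈ Las_{t−k}(K) with z^{(j)}_{\{i\}} ∈ {0,1} for all i ∈ S and all j, and coefficients λ_1, …, λ_N ≥ 0 with Σ_j λ_j = 1, such that y_J = Σ_j λ_j · z^{(j)}_J for every subset J with |J| ≤ 2(t−k)+2. -/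
open Finset

/-- Membership in the polyhedron `K = {x : A x ≥ b}`. -/
def memK {n m : ℕ} (A : Matrix (Fin m) (Fin n) ℝ) (b : Fin m → ℝ) (x : Fin n → ℝ) : Prop :=
  ∀ ℓ : Fin m, b ℓ ≤ ∑ i, A ℓ i * x i

/-- The moment matrix of a vector `y` indexed by subsets, truncated at sets of size `≤ t`. -/
def momentMatrix {α : Type*} [Fintype α] [DecidableEq α] (y : Finset α → ℝ) (t : ℕ) :
    Matrix {I : Finset α // I.card ≤ t} {I : Finset α // I.card ≤ t} ℝ :=
  fun I J => y (I.1 ∪ J.1)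

/-- The shift operator `(a;β) * y` for a linear constraint `aᵀx ≥ β`. -/
def shiftVec {α ι : Type*} [Fintype α] [DecidableEq α]
    (A : ι → α → ℝ) (b : ι → ℝ) (ℓ : ι) (y : Finset α → ℝ) : Finset α → ℝ :=
  fun I => (∑ i, A ℓ i * y (insert i I)) - b ℓ * y I

/-- `y ∈ Las_t(K)` where `K = {x : A x ≥ b}`: `y_∅ = 1`, the moment matrix truncated at
sets of size `≤ t+1` is PSD, and each shifted moment matrix truncated at sets of size
`≤ t` is PSD. -/
def IsLasserre {α ι : Type*} [Fintype α] [DecidableEq α]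
    (A : ι → α → ℝ) (b : ι → ℝ) (t : ℕ) (y : Finset α → ℝ) : Prop :=
  y ∅ = 1 ∧ (momentMatrix y (t + 1)).PosSemidef ∧
    ∀ ℓ : ι, (momentMatrix (shiftVec A b ℓ y) t).PosSemidef

/-!
Moments of sets meeting `S` in more than `k` elements vanish: for `I ⊆ S` with `|I| = k + 1`, a
nonzero `y_I` would make `(y_{I ∪ {r}} / y_I)_r` a point of `K` with `x_I = 1`, and a zero
diagonal entry of a PSD moment matrix kills its row. So `y` may be replaced by its truncation `g`
to the other sets. For `I ⊆ S` let `w_I` be `g` multiplied by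
`∏_{i ∈ I} x_i ∏_{j ∈ S \ I} (1 - x_j)`. These polynomials sum to `1` and are idempotent, and
where `g` vanishes only their parts of degree `≤ k` matter; hence `w_I` is `g` multiplied by a
square of degree `≤ k` and satisfies the level `t - k` constraints. The nonzero `w_I`, normalised,
are the `z^{(j)}`, with `λ_j = w_I(∅)`, and `z_{\{i\}} = [i ∈ I]` on `S`.
-/

section Alternating

variable {α : Type*} [DecidableEq α]

lemma sum_powerset_neg_one_pow_mul_eq_zero {T : Finset α} {a : α} (ha : a ∈ T)
    {F : Finset α → ℝ} (hF : ∀ V, F (insert a V) = F V) :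
    ∑ V ∈ T.powerset, (-1 : ℝ) ^ #V * F V = 0 := by
  have haT : a ∉ T.erase a := notMem_erase a T
  rw [← insert_erase ha, sum_powerset_insert haT, ← sum_add_distrib]
  refine sum_eq_zero fun V hV => ?_
  have haV : a ∉ V := fun h => haT (mem_powerset.1 hV h)
  rw [card_insert_of_notMem haV, hF, pow_succ]
  ring

/-- Only the term `V = ∅` survives: for `a ∈ V`, toggling `a` in `W` flips the sign but not
`F (V ∪ W)`. -/
lemma sum_powerset_sum_powerset_neg_one_pow_union (T : Finset α) (F : Finset α → ℝ) :
    ∑ V ∈ T.powerset, ∑ W ∈ T.powerset, (-1 : ℝ) ^ #V * (-1 : ℝ) ^ #W * F (V ∪ W)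
      = ∑ W ∈ T.powerset, (-1 : ℝ) ^ #W * F W := by
  rw [sum_eq_single_of_mem ∅ (empty_mem_powerset T)]
  · simp
  intro V hV hV0
  obtain ⟨a, haV⟩ := nonempty_iff_ne_empty.2 hV0
  simp_rw [mul_assoc, ← mul_sum]
  rw [sum_powerset_neg_one_pow_mul_eq_zero (mem_powerset.1 hV haV) (F := fun W => F (V ∪ W))
    fun W => by rw [union_insert, insert_eq_of_mem (mem_union_left W haV)], mul_zero]

lemma sum_powerset_sum_powerset_sdiff_neg_one_pow (T : Finset α) (F : Finset α → ℝ) :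
    ∑ I ∈ T.powerset, ∑ V ∈ (T \ I).powerset, (-1 : ℝ) ^ #V * F (I ∪ V) = F ∅ := by
  induction T using Finset.induction generalizing F with
  | empty => simp
  | @insert a T ha ih =>
    rw [sum_powerset_insert ha, ← sum_add_distrib, ← ih F]
    refine sum_congr rfl fun I hI => ?_
    have haI : a ∉ I := fun h => ha (mem_powerset.1 hI h)
    have haTI : a ∉ T \ I := fun h => ha (mem_sdiff.1 h).1
    rw [insert_sdiff_of_notMem _ haI, insert_sdiff_insert, sdiff_insert_of_notMem ha,
      sum_powerset_insert haTI, add_assoc, ← sum_add_distrib, add_eq_left]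
    refine sum_eq_zero fun V hV => ?_
    have haV : a ∉ V := fun h => haTI (mem_powerset.1 hV h)
    rw [card_insert_of_notMem haV, union_insert, insert_union, pow_succ]
    ring

end Alternating

lemma exists_fin_sum_mul_normalized_eq {β γ : Type*} (G : Finset β) (w : β → γ → ℝ) (o : γ)
    (hw : ∀ I ∈ G, 0 < w I o) :
    ∃ (N : ℕ) (lam : Fin N → ℝ) (z : Fin N → γ → ℝ),
      (∀ j, ∃ I ∈ G, z j = (w I o)⁻¹ • w I) ∧ (∀ j, 0 ≤ lam j) ∧
      ∑ j, lam j = ∑ I ∈ G, w I o ∧ ∀ x, ∑ j, lam j * z j x = ∑ I ∈ G, w I x := by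
  let e : Fin #G ≃ G := G.equivFin.symm
  refine ⟨#G, fun j => w (e j) o, fun j => (w (e j) o)⁻¹ • w (e j),
    fun j => ⟨e j, (e j).2, rfl⟩, fun j => (hw _ (e j).2).le, ?_, fun x => ?_⟩
  · rw [← sum_coe_sort G]
    exact e.sum_comp fun I => w I o
  · simp_rw [Pi.smul_apply, smul_eq_mul, mul_inv_cancel_left₀ (hw _ (e _).2).ne']
    rw [← sum_coe_sort G]
    exact e.sum_comp fun I => w I x

open Matrix in
lemma Matrix.PosSemidef.apply_eq_zero_of_diag_eq_zero {n : Type*} [Fintype n] [DecidableEq n]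
    {M : Matrix n n ℝ} (hM : M.PosSemidef) {i : n} (hi : M i i = 0) (j : n) : M i j = 0 := by
  have hcol : M *ᵥ Pi.single i 1 = 0 :=
    (hM.dotProduct_mulVec_zero_iff _).1 (by simp [mulVec_single, hi])
  have hji : M j i = 0 := by simpa [mulVec_single] using congrFun hcol j
  rw [← hM.isHermitian.apply i j, hji, star_zero]

section Moments

variable {α : Type*} [Fintype α] [DecidableEq α]

lemma momentMatrix_congr {y y' : Finset α → ℝ} {s : ℕ} (h : ∀ M, #M ≤ 2 * s → y M = y' M) :
    momentMatrix y s = momentMatrix y' s := by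
  ext I J
  exact h _ ((card_union_le _ _).trans (by omega))

lemma zero_le_of_posSemidef_momentMatrix {y : Finset α → ℝ} {s : ℕ}
    (hy : (momentMatrix y s).PosSemidef) {I : Finset α} (hI : #I ≤ s) : 0 ≤ y I := by
  simpa [momentMatrix] using hy.diag_nonneg (i := ⟨I, hI⟩)

lemma apply_union_eq_zero_of_posSemidef_momentMatrix {y : Finset α → ℝ} {s : ℕ}
    (hy : (momentMatrix y s).PosSemidef) {I K : Finset α} (hI : #I ≤ s) (hK : #K ≤ s)
    (h0 : y I = 0) : y (I ∪ K) = 0 :=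
  hy.apply_eq_zero_of_diag_eq_zero (i := ⟨I, hI⟩) (by simpa [momentMatrix] using h0) ⟨K, hK⟩

/-- Split `J` as `K ∪ (J \ K)` with `I ⊆ K` and both parts of size at most `s`, and apply the
zero-diagonal argument twice. -/
lemma apply_eq_zero_of_posSemidef_momentMatrix {y : Finset α → ℝ} {s : ℕ}
    (hy : (momentMatrix y s).PosSemidef) {I J : Finset α} (hI : #I ≤ s) (h0 : y I = 0)
    (hIJ : I ⊆ J) (hJ : #J ≤ 2 * s) : y J = 0 := by
  obtain ⟨K, hIK, hKJ, hK⟩ := exists_subsuperset_card_eq hIJ (le_min hI (card_le_card hIJ))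
    (min_le_right s #J)
  have hK0 : y K = 0 := by
    rw [← union_eq_right.2 hIK]
    exact apply_union_eq_zero_of_posSemidef_momentMatrix hy hI (hK ▸ min_le_left _ _) h0
  rw [← union_sdiff_of_subset hKJ]
  refine apply_union_eq_zero_of_posSemidef_momentMatrix hy (hK ▸ min_le_left _ _) ?_ hK0
  rw [card_sdiff_of_subset hKJ]
  omega

open Matrix in
/-- This is `y` multiplied by the square of `∑ i ∈ F, c i x^{U i}`: its quadratic form at `x` is
that of `y` at `(M, i) ↦ x M * c i`, pulled back along `(M, i) ↦ M ∪ U i`. -/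
lemma posSemidef_momentMatrix_sum_sum {β : Type*} {y : Finset α → ℝ} {s k : ℕ} (hks : k ≤ s)
    (F : Finset β) (U : β → Finset α) (c : β → ℝ) (hU : ∀ i ∈ F, #(U i) ≤ k)
    (hy : (momentMatrix y s).PosSemidef) :
    (momentMatrix (fun M => ∑ i ∈ F, ∑ j ∈ F, c i * c j * y (M ∪ U i ∪ U j))
      (s - k)).PosSemidef := by
  let f : {M : Finset α // #M ≤ s - k} × F → {N : Finset α // #N ≤ s} := fun p =>
    ⟨p.1.1 ∪ U p.2, (card_union_le _ _).trans (by have := hU _ p.2.2; have := p.1.2; omega)⟩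
  refine .of_dotProduct_mulVec_nonneg ?_ fun x => ?_
  · ext M M'
    simp [momentMatrix, union_comm M.1]
  convert (hy.submatrix f).dotProduct_mulVec_nonneg fun p => x p.1 * c p.2 using 1
  simp only [dotProduct, mulVec, submatrix_apply, momentMatrix, Fintype.sum_prod_type, star_trivial,
    Finset.mul_sum, Finset.sum_mul, f]
  simp_rw [← Finset.sum_coe_sort F]
  refine sum_congr rfl fun M _ => ?_
  conv_rhs => rw [Finset.sum_comm]
  refine sum_congr rfl fun M' _ => ?_
  refine sum_congr rfl fun i _ => ?_
  refine sum_congr rfl fun j _ => ?_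
  rw [show M.1 ∪ M'.1 ∪ U i ∪ U j = M.1 ∪ U i ∪ (M'.1 ∪ U j) by
    simp only [union_assoc, union_left_comm]]
  ring

end Moments

section Conditioning

variable {α ι : Type*} [DecidableEq α]

def VanishesAbove (S : Finset α) (k : ℕ) (y : Finset α → ℝ) : Prop :=
  ∀ X, k < #(X ∩ S) → y X = 0

lemma VanishesAbove.apply_eq_zero {S : Finset α} {k : ℕ} {y : Finset α → ℝ}
    (hy : VanishesAbove S k y) {T X : Finset α} (hTS : T ⊆ S) (hT : k < #T) (hTX : T ⊆ X) :
    y X = 0 :=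
  hy X (hT.trans_le (card_le_card (subset_inter hTX hTS)))

lemma VanishesAbove.shiftVec [Fintype α] {S : Finset α} {k : ℕ} {y : Finset α → ℝ}
    (hy : VanishesAbove S k y) (A : ι → α → ℝ) (b : ι → ℝ) (ℓ : ι) :
    VanishesAbove S k (shiftVec A b ℓ y) := by
  intro X hX
  have hins : ∀ i, y (insert i X) = 0 := fun i =>
    hy.apply_eq_zero inter_subset_right hX (inter_subset_left.trans (subset_insert i X))
  simp [_root_.shiftVec, hins, hy X hX]

lemma exists_vanishesAbove_eq {S : Finset α} {k r : ℕ} {y : Finset α → ℝ}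
    (hy : ∀ M, #M ≤ r → k < #(M ∩ S) → y M = 0) :
    ∃ g, VanishesAbove S k g ∧ ∀ M, #M ≤ r → g M = y M := by
  refine ⟨fun M => if k < #(M ∩ S) then 0 else y M, fun X hX => if_pos hX, fun M hM => ?_⟩
  dsimp only
  split_ifs with h
  exacts [(hy M hM h).symm, rfl]

/-- The moment vector `y` multiplied by `∏_{i ∈ I} x_i ∏_{j ∈ S \ I} (1 - x_j)`, i.e. `y`
conditioned on `x_I = 1`, `x_{S \ I} = 0` but not renormalised. -/
def condMoment (S I : Finset α) (y : Finset α → ℝ) : Finset α → ℝ :=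
  fun M => ∑ V ∈ (S \ I).powerset, (-1 : ℝ) ^ #V * y (M ∪ I ∪ V)

lemma sum_condMoment (S : Finset α) (y : Finset α → ℝ) (M : Finset α) :
    ∑ I ∈ S.powerset, condMoment S I y M = y M := by
  simpa [condMoment, union_assoc] using sum_powerset_sum_powerset_sdiff_neg_one_pow S
    (fun X => y (M ∪ X))

lemma condMoment_singleton {S I : Finset α} (y : Finset α → ℝ) {i : α} (hi : i ∈ S) :
    condMoment S I y {i} = if i ∈ I then condMoment S I y ∅ else 0 := by
  split_ifs with hiI
  · simp [condMoment, union_eq_right.2 (singleton_subset_iff.2 hiI)]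
  · refine sum_powerset_neg_one_pow_mul_eq_zero (mem_sdiff.2 ⟨hi, hiI⟩) fun V => ?_
    rw [union_insert, insert_eq_of_mem (by simp)]

lemma shiftVec_condMoment [Fintype α] (A : ι → α → ℝ) (b : ι → ℝ) (ℓ : ι) (S I : Finset α)
    (y : Finset α → ℝ) :
    shiftVec A b ℓ (condMoment S I y) = condMoment S I (shiftVec A b ℓ y) := by
  funext M
  simp only [shiftVec, condMoment, mul_sum, mul_sub, sum_sub_distrib, insert_union]
  rw [sum_comm]
  congr 1 <;> refine sum_congr rfl fun V _ => ?_
  · exact sum_congr rfl fun i _ => mul_left_comm _ _ _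
  · exact mul_left_comm _ _ _

/-- Where `y` vanishes above `k`, only the terms of degree at most `k` of the idempotent
polynomial `∏_{i ∈ I} x_i ∏_{j ∈ S \ I} (1 - x_j)` matter, so `condMoment` is `y` multiplied by the
square of a polynomial of degree at most `k`. -/
lemma condMoment_eq_sum_sum {S I : Finset α} {k : ℕ} {y : Finset α → ℝ}
    (hy : VanishesAbove S k y) (hIS : I ⊆ S) (M : Finset α) :
    condMoment S I y M = ∑ V ∈ (S \ I).powerset with #(I ∪ V) ≤ k,
      ∑ W ∈ (S \ I).powerset with #(I ∪ W) ≤ k,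
        (-1 : ℝ) ^ #V * (-1 : ℝ) ^ #W * y (M ∪ (I ∪ V) ∪ (I ∪ W)) := by
  have hzero : ∀ V ∈ (S \ I).powerset, ¬ #(I ∪ V) ≤ k → ∀ X, I ∪ V ⊆ X → y X = 0 :=
    fun V hV hVk X hX => hy.apply_eq_zero
      (union_subset hIS ((mem_powerset.1 hV).trans sdiff_subset)) (not_le.1 hVk) hX
  have hset : ∀ V W, M ∪ I ∪ (V ∪ W) = M ∪ (I ∪ V) ∪ (I ∪ W) := fun V W => by
    ext; simp only [mem_union]; tauto
  rw [condMoment, ← sum_powerset_sum_powerset_neg_one_pow_union]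
  simp only [hset]
  symm
  rw [sum_filter_of_ne fun V hV hne => ?_]
  · refine sum_congr rfl fun V hV => sum_filter_of_ne fun W hW hne => ?_
    by_contra hW'
    exact hne (by rw [hzero W hW hW' _ subset_union_right, mul_zero])
  by_contra hV'
  exact hne (sum_eq_zero fun W _ => by
    rw [hzero V hV hV' _ (subset_union_right.trans subset_union_left), mul_zero])

end Conditioning

section Cone

variable {α ι : Type*} [Fintype α] [DecidableEq α]

lemma posSemidef_momentMatrix_condMoment {S I : Finset α} {k s : ℕ} {y : Finset α → ℝ}
    (hv : VanishesAbove S k y) (hIS : I ⊆ S) (hks : k ≤ s) (hy : (momentMatrix y s).PosSemidef) :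
    (momentMatrix (condMoment S I y) (s - k)).PosSemidef := by
  have h := posSemidef_momentMatrix_sum_sum hks ((S \ I).powerset.filter fun V => #(I ∪ V) ≤ k)
    (fun V => I ∪ V) (fun V => (-1 : ℝ) ^ #V) (fun V hV => (mem_filter.1 hV).2) hy
  rwa [← funext (condMoment_eq_sum_sum hv hIS)] at h

lemma shiftVec_smul (A : ι → α → ℝ) (b : ι → ℝ) (ℓ : ι) (c : ℝ) (y : Finset α → ℝ) :
    shiftVec A b ℓ (c • y) = c • shiftVec A b ℓ y := by
  funext M
  simp only [shiftVec, Pi.smul_apply, smul_eq_mul, mul_sub, mul_sum]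
  congr 1 <;> [exact sum_congr rfl fun i _ => mul_left_comm _ _ _; exact mul_left_comm _ _ _]

def IsLasserreCone (A : ι → α → ℝ) (b : ι → ℝ) (t : ℕ) (y : Finset α → ℝ) : Prop :=
  (momentMatrix y (t + 1)).PosSemidef ∧ ∀ ℓ : ι, (momentMatrix (shiftVec A b ℓ y) t).PosSemidef

namespace IsLasserreCone

variable {A : ι → α → ℝ} {b : ι → ℝ} {t : ℕ} {y : Finset α → ℝ}

lemma zero_le_empty (hy : IsLasserreCone A b t y) : 0 ≤ y ∅ :=
  zero_le_of_posSemidef_momentMatrix hy.1 (by simp)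

lemma smul (hy : IsLasserreCone A b t y) {c : ℝ} (hc : 0 ≤ c) : IsLasserreCone A b t (c • y) :=
  ⟨hy.1.smul hc, fun ℓ => by rw [shiftVec_smul]; exact (hy.2 ℓ).smul hc⟩

lemma isLasserre_inv_smul (hy : IsLasserreCone A b t y) (h0 : y ∅ ≠ 0) :
    IsLasserre A b t ((y ∅)⁻¹ • y) :=
  ⟨by simp [h0], hy.smul (inv_nonneg.2 hy.zero_le_empty)⟩

lemma congr {y' : Finset α → ℝ} (hy : IsLasserreCone A b t y)
    (h : ∀ M, #M ≤ 2 * t + 2 → y M = y' M) : IsLasserreCone A b t y' := by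
  refine ⟨momentMatrix_congr (s := t + 1) (fun M hM => h M (by omega)) ▸ hy.1, fun ℓ => ?_⟩
  rw [← momentMatrix_congr fun M hM => ?_]
  · exact hy.2 ℓ
  simp only [shiftVec, h M (by omega),
    fun i => h (insert i M) ((card_insert_le i M).trans (by omega))]

lemma eq_zero_of_empty_eq_zero (hy : IsLasserreCone A b t y) (h0 : y ∅ = 0) {J : Finset α}
    (hJ : #J ≤ 2 * t + 2) : y J = 0 :=
  apply_eq_zero_of_posSemidef_momentMatrix hy.1 (by simp) h0 (empty_subset J) (by omega)

lemma condMoment {S I : Finset α} {k : ℕ} (hy : IsLasserreCone A b t y)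
    (hv : VanishesAbove S k y) (hIS : I ⊆ S) (hkt : k ≤ t) :
    IsLasserreCone A b (t - k) (_root_.condMoment S I y) := by
  refine ⟨?_, fun ℓ => ?_⟩
  · rw [show t - k + 1 = t + 1 - k by omega]
    exact posSemidef_momentMatrix_condMoment hv hIS (by omega) hy.1
  · rw [shiftVec_condMoment]
    exact posSemidef_momentMatrix_condMoment (hv.shiftVec A b ℓ) hIS hkt (hy.2 ℓ)

end IsLasserreCone

end Cone

lemma IsLasserreCone.exists_memK_of_ne_zero {n m t : ℕ} {A : Matrix (Fin m) (Fin n) ℝ}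
    {b : Fin m → ℝ} {y : Finset (Fin n) → ℝ} (hy : IsLasserreCone A b t y) {I : Finset (Fin n)}
    (hI : #I ≤ t) (h0 : y I ≠ 0) : ∃ x, memK A b x ∧ ∀ i ∈ I, x i = 1 := by
  have hpos : 0 < y I := (zero_le_of_posSemidef_momentMatrix hy.1 (by omega)).lt_of_ne' h0
  refine ⟨fun r => y (insert r I) / y I, fun ℓ => ?_, fun i hi => by
    simp [insert_eq_of_mem hi, hpos.ne']⟩
  have hℓ := zero_le_of_posSemidef_momentMatrix (hy.2 ℓ) hI
  simp only [shiftVec, sub_nonneg] at hℓ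
  calc b ℓ = b ℓ * y I / y I := by field_simp
    _ ≤ (∑ i, A ℓ i * y (insert i I)) / y I := div_le_div_of_nonneg_right hℓ hpos.le
    _ = ∑ i, A ℓ i * (y (insert i I) / y I) := by simp only [sum_div, mul_div_assoc]

lemma IsLasserreCone.eq_zero_of_lt_card_inter {n m t k : ℕ} {A : Matrix (Fin m) (Fin n) ℝ}
    {b : Fin m → ℝ} {y : Finset (Fin n) → ℝ} (hy : IsLasserreCone A b t y) (hkt : k < t)
    {S : Finset (Fin n)} (hS : ∀ I ⊆ S, (∃ x, memK A b x ∧ ∀ i ∈ I, x i = 1) → #I ≤ k)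
    {M : Finset (Fin n)} (hM : #M ≤ 2 * t + 2) (hMS : k < #(M ∩ S)) : y M = 0 := by
  obtain ⟨I, hIM, hI⟩ := exists_subset_card_eq (show k + 1 ≤ #(M ∩ S) by omega)
  have hI0 : y I = 0 := by
    by_contra h
    have := hS I (hIM.trans inter_subset_right) (hy.exists_memK_of_ne_zero (by omega) h)
    omega
  exact apply_eq_zero_of_posSemidef_momentMatrix hy.1 (by omega) hI0
    (hIM.trans inter_subset_left) (by omega)

/-- Decomposition Theorem (feasibility form): if `y ∈ Las_t(K)`, `S ⊆ [n]` and `k < t` are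
such that every `I ⊆ S` for which `K ∩ {x : x_i = 1 ∀ i ∈ I} ≠ ∅` has `|I| ≤ k`, then the
truncation of `y` is a convex combination of level-`(t-k)` Lasserre solutions integral on `S`. -/
theorem lasserre_decomposition_feasibility (n m t k : ℕ) (hk : k < t)
    (A : Matrix (Fin m) (Fin n) ℝ) (b : Fin m → ℝ)
    (y : Finset (Fin n) → ℝ) (hy : IsLasserre (fun ℓ i => A ℓ i) b t y)
    (S : Finset (Fin n))
    (hSk : ∀ I : Finset (Fin n), I ⊆ S →
      (∃ x : Fin n → ℝ, memK A b x ∧ ∀ i ∈ I, x i = 1) → I.card ≤ k) :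
    ∃ (N : ℕ) (lam : Fin N → ℝ) (z : Fin N → Finset (Fin n) → ℝ),
      (∀ j, IsLasserre (fun ℓ i => A ℓ i) b (t - k) (z j)) ∧
      (∀ j, ∀ i ∈ S, z j {i} = 0 ∨ z j {i} = 1) ∧
      (∀ j, 0 ≤ lam j) ∧ (∑ j, lam j = 1) ∧
      (∀ J : Finset (Fin n), J.card ≤ 2 * (t - k) + 2 →
        y J = ∑ j, lam j * z j J) := by
  classical
  obtain ⟨hy0, hy⟩ : y ∅ = 1 ∧ IsLasserreCone (fun ℓ i => A ℓ i) b t y := hy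
  obtain ⟨g, hgS, hgy⟩ :=
    exists_vanishesAbove_eq fun M hM hMS => IsLasserreCone.eq_zero_of_lt_card_inter hy hk hSk hM hMS
  have hg : IsLasserreCone (fun ℓ i => A ℓ i) b t g := hy.congr fun M hM => (hgy M hM).symm
  have hw : ∀ I ∈ S.powerset, IsLasserreCone (fun ℓ i => A ℓ i) b (t - k) (condMoment S I g) :=
    fun I hI => hg.condMoment hgS (mem_powerset.1 hI) hk.le
  set G := S.powerset.filter fun I => condMoment S I g ∅ ≠ 0 with hG
  have hGy : ∀ J : Finset (Fin n), #J ≤ 2 * (t - k) + 2 → ∑ I ∈ G, condMoment S I g J = y J := by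
    intro J hJ
    rw [hG, sum_filter_of_ne fun I hI hJ0 => mt (hw I hI).eq_zero_of_empty_eq_zero (hJ0 <| · hJ),
      sum_condMoment, hgy J (by omega)]
  obtain ⟨N, lam, z, hz, hlam, hsum, hcomb⟩ := exists_fin_sum_mul_normalized_eq G
    (fun I => condMoment S I g) ∅ fun I hI =>
      (hw I (mem_filter.1 hI).1).zero_le_empty.lt_of_ne' (mem_filter.1 hI).2
  refine ⟨N, lam, z, fun j => ?_, fun j i hi => ?_, hlam, ?_, fun J hJ => ?_⟩
  · obtain ⟨I, hI, hzj⟩ := hz j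
    rw [hzj]
    exact (hw I (mem_filter.1 hI).1).isLasserre_inv_smul (mem_filter.1 hI).2
  · obtain ⟨I, hI, hzj⟩ := hz j
    rw [hzj, Pi.smul_apply, condMoment_singleton g hi, smul_eq_mul]
    split_ifs
    exacts [Or.inr (inv_mul_cancel₀ (mem_filter.1 hI).2), Or.inl (mul_zero _)]
  · rw [hsum, hGy ∅ (by simp), hy0]
  · rw [hcomb, hGy J hJ]
end

section
/- (Feasibility of normalized conditioned solutions.) Let 𝒯₁, 𝒯₂ be families of subsets of [n] both containing ∅, let X ⊆ S ⊆ [n], and let y be a real vector indexed by all subsets of [n] with y_∅ = 1, with M_{𝒯₁}(y) positive semidefinite and M_{𝒯₂}((A_ℓ;b_ℓ)*y) positive semidefinite for all ℓ ∈ [m]. Define z := {y}_{X,−S∖X}. If z_∅ > 0 then w := z/z_∅ satisfies: w_∅ = 1; M_{𝒯₁⊖S}(w) is positive semidefinite; M_{𝒯₂⊖S}((A_ℓ;b_ℓ)*w) is positive semidefinite for all ℓ ∈ [m]; w_I = 1 for every I ⊆ X; and w_I = 0 for every I ⊆ S with I ∩ (S∖X) ≠ ∅. -/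
open Finset

/-- The moment matrix of `y` indexed by a family `𝒯` of subsets of `[n]`. -/
def momM (n : ℕ) (T : Finset (Finset (Fin n))) (y : Finset (Fin n) → ℝ) :
    Matrix {I // I ∈ T} {I // I ∈ T} ℝ :=
  Matrix.of fun I J => y (I.1 ∪ J.1)

/-- `𝒯 ⊖ S := {I ∈ 𝒯 : I ∪ J ∈ 𝒯 for all J ⊆ S}`. -/
def famOminus (n : ℕ) (T : Finset (Finset (Fin n))) (S : Finset (Fin n)) :
    Finset (Finset (Fin n)) :=
  T.filter fun I => ∀ J ∈ S.powerset, I ∪ J ∈ T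

/-- The conditioning `{y}_{X, −S∖X}`. -/
def conditioning (n : ℕ) (y : Finset (Fin n) → ℝ) (X S : Finset (Fin n)) :
    Finset (Fin n) → ℝ :=
  fun I => ∑ H ∈ (S \ X).powerset, (-1 : ℝ) ^ H.card * y (I ∪ X ∪ H)

/-- The shift operator `(A_ℓ; b_ℓ) * y`. -/
def shiftOp (n m : ℕ) (A : Matrix (Fin m) (Fin n) ℝ) (b : Fin m → ℝ) (ℓ : Fin m)
    (y : Finset (Fin n) → ℝ) : Finset (Fin n) → ℝ :=
  fun I => (∑ i, A ℓ i * y (insert i I)) - b ℓ * y I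

/-!
Conditioning is the signed sum `∑_{H ⊆ D} (-1)^|H| f(K ∪ H)` with `D = S ∖ X`, evaluated at
`K = I ∪ X`. This operator is the composite of the finite differences `f ↦ f - f(insert a ·)`,
`a ∈ D`, which commute and are idempotent, so it is idempotent. Idempotency writes every entry
`z_{I ∪ J}` of the conditioned moment matrix as `∑_{H, H'} ± y_{(I ∪ X ∪ H) ∪ (J ∪ X ∪ H')}`, i.e.
as `Cᵀ M C` with `M` a principal submatrix (with repeated indices) of `M_𝒯(y)`, so positive
semidefiniteness passes to `z`. The shift operator commutes with conditioning, and a finite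
difference in direction `a` vanishes on sets containing `a`.
-/

section InclusionExclusion

variable {α R : Type*} [DecidableEq α] [Ring R]

def finDiff (a : α) (f : Finset α → R) : Finset α → R :=
  fun K => f K - f (insert a K)

def inclExcl (D : Finset α) (f : Finset α → R) : Finset α → R :=
  fun K => ∑ H ∈ D.powerset, (-1 : R) ^ #H * f (K ∪ H)

lemma finDiff_idem (a : α) (f : Finset α → R) : finDiff a (finDiff a f) = finDiff a f := by
  funext K
  simp only [finDiff, insert_idem, sub_self, sub_zero]

lemma finDiff_inclExcl (a : α) (D : Finset α) (f : Finset α → R) :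
    finDiff a (inclExcl D f) = inclExcl D (finDiff a f) := by
  funext K
  simp only [finDiff, inclExcl, insert_union, mul_sub, sum_sub_distrib]

lemma inclExcl_insert {a : α} {D : Finset α} (ha : a ∉ D) (f : Finset α → R) :
    inclExcl (insert a D) f = inclExcl D (finDiff a f) := by
  funext K
  simp only [inclExcl, finDiff, sum_powerset_insert ha, mul_sub, sum_sub_distrib]
  rw [sub_eq_add_neg, ← sum_neg_distrib]
  congr 1
  refine sum_congr rfl fun H hH => ?_
  rw [card_insert_of_notMem fun haH => ha (mem_powerset.mp hH haH), union_insert,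
    pow_succ, mul_neg_one, neg_mul]

lemma inclExcl_idem (D : Finset α) (f : Finset α → R) :
    inclExcl D (inclExcl D f) = inclExcl D f := by
  induction D using Finset.induction_on generalizing f with
  | empty => funext K; simp [inclExcl]
  | insert a D ha ih =>
    rw [inclExcl_insert ha, inclExcl_insert ha, finDiff_inclExcl, finDiff_idem, ih]

lemma inclExcl_eq_zero {a : α} {D K : Finset α} (haD : a ∈ D) (haK : a ∈ K)
    (f : Finset α → R) : inclExcl D f K = 0 := by
  rw [← insert_erase haD, inclExcl_insert (notMem_erase a D)]
  refine sum_eq_zero fun H _ => ?_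
  rw [finDiff, insert_eq_self.mpr (mem_union_left H haK), sub_self, mul_zero]

end InclusionExclusion

open Matrix

lemma conditioning_eq_inclExcl {n : ℕ} (y : Finset (Fin n) → ℝ) (X S : Finset (Fin n)) :
    conditioning n y X S = fun I => inclExcl (S \ X) y (I ∪ X) := rfl

lemma conditioning_of_subset {n : ℕ} (y : Finset (Fin n) → ℝ) {X I : Finset (Fin n)}
    (S : Finset (Fin n)) (hI : I ⊆ X) : conditioning n y X S I = conditioning n y X S ∅ := by
  simp only [conditioning, union_eq_right.mpr hI, empty_union]

lemma conditioning_eq_zero {n : ℕ} (y : Finset (Fin n) → ℝ) {X S I : Finset (Fin n)}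
    (hI : (I ∩ (S \ X)).Nonempty) : conditioning n y X S I = 0 := by
  obtain ⟨a, ha⟩ := hI
  exact inclExcl_eq_zero (mem_inter.mp ha).2 (mem_union_left X (mem_inter.mp ha).1) y

lemma union_mem_of_mem_famOminus {n : ℕ} {T : Finset (Finset (Fin n))} {S I J : Finset (Fin n)}
    (hI : I ∈ famOminus n T S) (hJ : J ⊆ S) : I ∪ J ∈ T :=
  (mem_filter.mp hI).2 J (mem_powerset.mpr hJ)

lemma posSemidef_momM_conditioning {n : ℕ} {T : Finset (Finset (Fin n))} {X S : Finset (Fin n)}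
    (hXS : X ⊆ S) {y : Finset (Fin n) → ℝ} (hy : (momM n T y).PosSemidef) :
    (momM n (famOminus n T S) (conditioning n y X S)).PosSemidef := by
  let lift : {I // I ∈ famOminus n T S} × {H // H ∈ (S \ X).powerset} → {K // K ∈ T} :=
    fun p => ⟨p.1.1 ∪ (X ∪ p.2.1), union_mem_of_mem_famOminus p.1.2
      (union_subset hXS ((mem_powerset.mp p.2.2).trans sdiff_subset))⟩
  let signs : Matrix ({I // I ∈ famOminus n T S} × {H // H ∈ (S \ X).powerset})
      {I // I ∈ famOminus n T S} ℝ :=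
    of fun p J => if p.1 = J then (-1) ^ #p.2.1 else 0
  convert (hy.submatrix lift).conjTranspose_mul_mul_same signs using 1
  ext I J
  rw [conditioning_eq_inclExcl, ← inclExcl_idem]
  simp only [momM, signs, lift, inclExcl, mul_apply, conjTranspose_apply, submatrix_apply,
    of_apply, star_trivial, Fintype.sum_prod_type_right, ite_mul, zero_mul, mul_ite, mul_zero,
    sum_ite_eq', mem_univ, if_true, ← sum_coe_sort (S \ X).powerset, mul_sum, sum_mul]
  refine sum_congr rfl fun H _ => sum_congr rfl fun H' _ => ?_
  rw [show I.1 ∪ J.1 ∪ X ∪ H ∪ H' = I.1 ∪ (X ∪ H') ∪ (J.1 ∪ (X ∪ H)) by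
    ext; simp only [mem_union]; tauto]
  ring

lemma momM_smul {n : ℕ} (T : Finset (Finset (Fin n))) (c : ℝ) (f : Finset (Fin n) → ℝ) :
    momM n T (c • f) = c • momM n T f := rfl

lemma shiftOp_smul {n m : ℕ} (A : Matrix (Fin m) (Fin n) ℝ) (b : Fin m → ℝ) (ℓ : Fin m)
    (c : ℝ) (f : Finset (Fin n) → ℝ) :
    shiftOp n m A b ℓ (c • f) = c • shiftOp n m A b ℓ f := by
  funext I
  simp only [shiftOp, Pi.smul_apply, smul_eq_mul, mul_sub, mul_sum, mul_left_comm]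

lemma shiftOp_conditioning {n m : ℕ} (A : Matrix (Fin m) (Fin n) ℝ) (b : Fin m → ℝ)
    (ℓ : Fin m) (y : Finset (Fin n) → ℝ) (X S : Finset (Fin n)) :
    shiftOp n m A b ℓ (conditioning n y X S) = conditioning n (shiftOp n m A b ℓ y) X S := by
  funext I
  simp only [shiftOp, conditioning, mul_sub, mul_sum, sum_sub_distrib, insert_union,
    mul_left_comm]
  rw [sum_comm]

theorem normalized_conditioning_feasible_general (n m : ℕ)
    (A : Matrix (Fin m) (Fin n) ℝ) (b : Fin m → ℝ)
    (T1 T2 : Finset (Finset (Fin n)))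
    (X S : Finset (Fin n)) (hXS : X ⊆ S)
    (y : Finset (Fin n) → ℝ)
    (hpsd1 : (momM n T1 y).PosSemidef)
    (hpsd2 : ∀ ℓ : Fin m, (momM n T2 (shiftOp n m A b ℓ y)).PosSemidef)
    (hzpos : 0 < conditioning n y X S ∅)
    (w : Finset (Fin n) → ℝ)
    (hw : ∀ I, w I = conditioning n y X S I / conditioning n y X S ∅) :
    w ∅ = 1 ∧
    (momM n (famOminus n T1 S) w).PosSemidef ∧
    (∀ ℓ : Fin m, (momM n (famOminus n T2 S) (shiftOp n m A b ℓ w)).PosSemidef) ∧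
    (∀ I : Finset (Fin n), I ⊆ X → w I = 1) ∧
    (∀ I : Finset (Fin n), I ⊆ S → (I ∩ (S \ X)).Nonempty → w I = 0) := by
  have hw_smul : w = (conditioning n y X S ∅)⁻¹ • conditioning n y X S :=
    funext fun I => by rw [hw, Pi.smul_apply, smul_eq_mul, div_eq_inv_mul]
  have hc : 0 ≤ (conditioning n y X S ∅)⁻¹ := inv_nonneg.mpr hzpos.le
  refine ⟨?_, ?_, fun ℓ => ?_, fun I hI => ?_, fun I _ hI => ?_⟩
  · rw [hw, div_self hzpos.ne']
  · rw [hw_smul, momM_smul]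
    exact (posSemidef_momM_conditioning hXS hpsd1).smul hc
  · rw [hw_smul, shiftOp_smul, momM_smul, shiftOp_conditioning]
    exact (posSemidef_momM_conditioning hXS (hpsd2 ℓ)).smul hc
  · rw [hw, conditioning_of_subset y S hI, div_self hzpos.ne']
  · rw [hw, conditioning_eq_zero y hI, zero_div]

/-- Feasibility of normalized conditioned solutions: if `y_∅ = 1`, `M_{𝒯₁}(y) ⪰ 0` and
`M_{𝒯₂}((A_ℓ;b_ℓ)*y) ⪰ 0` for all `ℓ`, and `z := {y}_{X,−S∖X}` has `z_∅ > 0`, then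
`w := z / z_∅` satisfies `w_∅ = 1`, `M_{𝒯₁⊖S}(w) ⪰ 0`, `M_{𝒯₂⊖S}((A_ℓ;b_ℓ)*w) ⪰ 0`,
`w_I = 1` for `I ⊆ X`, and `w_I = 0` for `I ⊆ S` meeting `S∖X`. -/
theorem normalized_conditioning_feasible (n m : ℕ)
    (A : Matrix (Fin m) (Fin n) ℝ) (b : Fin m → ℝ)
    (T1 T2 : Finset (Finset (Fin n))) (hT1 : ∅ ∈ T1) (hT2 : ∅ ∈ T2)
    (X S : Finset (Fin n)) (hXS : X ⊆ S)
    (y : Finset (Fin n) → ℝ) (hy0 : y ∅ = 1)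
    (hpsd1 : (momM n T1 y).PosSemidef)
    (hpsd2 : ∀ ℓ : Fin m, (momM n T2 (shiftOp n m A b ℓ y)).PosSemidef)
    (hzpos : 0 < conditioning n y X S ∅)
    (w : Finset (Fin n) → ℝ)
    (hw : ∀ I, w I = conditioning n y X S I / conditioning n y X S ∅) :
    w ∅ = 1 ∧
    (momM n (famOminus n T1 S) w).PosSemidef ∧
    (∀ ℓ : Fin m, (momM n (famOminus n T2 S) (shiftOp n m A b ℓ w)).PosSemidef) ∧
    (∀ I : Finset (Fin n), I ⊆ X → w I = 1) ∧
    (∀ I : Finset (Fin n), I ⊆ S → (I ∩ (S \ X)).Nonempty → w I = 0) :=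
  normalized_conditioning_feasible_general n m A b T1 T2 X S hXS y hpsd1 hpsd2 hzpos w hw
end

section
/- Let Y ∈ Las_{2ℓ}(K) be a level-2ℓ Lasserre solution for the Directed Steiner Tree LP K on an ℓ-level graph, and fix a terminal s ∈ X. Then (a) Σ_{P ∈ Q(s)} y_P = 1, where Q(s) is the set of directed r–s paths and y_P is the entry of Y indexed by the edge set P; and (b) for every vertex v and every r–v path P', Σ_{P ∈ Q(s) : P' ⊆ P} y_P ≤ y_{P'}. -/
open Finset

/-- An `ℓ`-level Directed Steiner Tree instance: a directed graph on vertex set `V` with edge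
set `E`, root `r`, terminal set `X`, whose vertices are arranged in levels
`V_0 = {r}, V_1, …, V_levels = X` with every edge going from one level to the next. -/
structure DSTInstance (V : Type*) [Fintype V] [DecidableEq V] where
  E : Finset (V × V)
  r : V
  X : Finset V
  levels : ℕ
  level : V → ℕ
  level_le : ∀ v, level v ≤ levels
  level_root : ∀ v, level v = 0 ↔ v = r
  level_terminal : ∀ v, level v = levels ↔ v ∈ X
  edge_level : ∀ e ∈ E, level e.2 = level e.1 + 1

variable {V : Type*} [Fintype V] [DecidableEq V]

/-- LP variables of the Directed Steiner Tree LP: a capacity variable `y_e` for each edge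
`e ∈ E` and a flow variable `f_{s,e}` for each terminal `s ∈ X` and edge `e ∈ E`. -/
def DSTVar (G : DSTInstance V) : Type _ :=
  {e : V × V // e ∈ G.E} ⊕ {p : V × (V × V) // p.1 ∈ G.X ∧ p.2 ∈ G.E}

instance (G : DSTInstance V) : Fintype (DSTVar G) :=
  inferInstanceAs (Fintype ({e : V × V // e ∈ G.E} ⊕ {p : V × (V × V) // p.1 ∈ G.X ∧ p.2 ∈ G.E}))

instance (G : DSTInstance V) : DecidableEq (DSTVar G) :=
  inferInstanceAs (DecidableEq ({e : V × V // e ∈ G.E} ⊕ {p : V × (V × V) // p.1 ∈ G.X ∧ p.2 ∈ G.E}))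

/-- Index type for the linear constraints of the Directed Steiner Tree LP: flow conservation
(for each terminal `s ∈ X` and vertex `v`, two inequalities forming an equality), capacity
constraints `f_{s,e} ≤ y_e`, indegree constraints `Σ_{e ∈ δ⁻(v)} y_e ≤ 1`, and the box
constraints `0 ≤ x ≤ 1` for every variable. -/
def DSTCon (G : DSTInstance V) : Type _ :=
  (({s : V // s ∈ G.X} × V) × Bool) ⊕
  ({p : V × (V × V) // p.1 ∈ G.X ∧ p.2 ∈ G.E} ⊕
  (V ⊕ (DSTVar G × Bool)))

/-- Left-hand side coefficients of the Directed Steiner Tree LP constraints (as `a·x ≥ β`). -/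
def dstA (G : DSTInstance V) : DSTCon G → DSTVar G → ℝ
  | Sum.inl ((s, v), d) => fun w =>
      (if d then (1 : ℝ) else -1) *
        (match w with
          | Sum.inl _ => 0
          | Sum.inr p =>
              if p.1.1 = s.1 then
                (if p.1.2.1 = v then (1 : ℝ) else 0) - (if p.1.2.2 = v then (1 : ℝ) else 0)
              else 0)
  | Sum.inr (Sum.inl p) => fun w =>
      (match w with
        | Sum.inl e => if e.1 = p.1.2 then (1 : ℝ) else 0
        | Sum.inr q => if q.1 = p.1 then (-1 : ℝ) else 0)
  | Sum.inr (Sum.inr (Sum.inl v)) => fun w =>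
      (match w with
        | Sum.inl e => if e.1.2 = v then (-1 : ℝ) else 0
        | Sum.inr _ => 0)
  | Sum.inr (Sum.inr (Sum.inr (w0, d))) => fun w =>
      if w = w0 then (if d then (1 : ℝ) else -1) else 0

/-- Right-hand sides of the Directed Steiner Tree LP constraints (as `a·x ≥ β`). -/
def dstb (G : DSTInstance V) : DSTCon G → ℝ
  | Sum.inl ((s, v), d) =>
      (if d then (1 : ℝ) else -1) *
        (if v = G.r then 1 else if v = s.1 then -1 else 0)
  | Sum.inr (Sum.inl _) => 0
  | Sum.inr (Sum.inr (Sum.inl _)) => -1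
  | Sum.inr (Sum.inr (Sum.inr (_, d))) => if d then (0 : ℝ) else -1

/-- `IsRPath G P v`: the edge set `P` is a directed path from the root `r` to `v` in `G`. -/
inductive IsRPath (G : DSTInstance V) : Finset (V × V) → V → Prop
  | nil : IsRPath G ∅ G.r
  | cons {P : Finset (V × V)} {u v : V} :
      IsRPath G P u → (u, v) ∈ G.E → IsRPath G (insert (u, v) P) v

/-- The set of Lasserre variables corresponding to the capacity variables `y_e`, `e ∈ P`. -/
def edgeVars (G : DSTInstance V) (P : Finset (V × V)) : Finset (DSTVar G) :=
  ((Finset.univ : Finset {e : V × V // e ∈ G.E}).filter (fun e => e.1 ∈ P)).image Sum.inl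

/-!
Write `y_J` for the entries of `Y` and `f(P)` for the flow variables of `s` along `P`. For `|J|`
small, the diagonals of the shifted moment matrices say that every LP constraint holds for the
vector `I ↦ y_{J ∪ I}`: conservation of flow, `y_{J+f_e} ≤ y_{J+e}`, and indegree at most one.

Pushing the flow out of the root one level at a time gives `Σ_{P ∈ Q(s)} y_{J ∪ f(P)} = y_J` for
`|J| ≤ ℓ`: if `J` already carries the flow along an `r`–`u` path, the indegree constraint kills
the flow on every other edge into `u`, so conservation at `u` makes the outflow equal to `y_J`;
at the last level, the flow reaching a terminal other than `s` vanishes. Conversely, once all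
edges of an `r`–`s` path `P` are bought, conservation read backwards from `s` forces the flow
onto `P`, i.e. `y_{E(P)} = y_{E(P) ∪ f(P)}`. By monotonicity of `y`, (b) is the flow identity for
`J = E(P')`, and (a) follows from (b) at the root and `y_{f(P)} ≤ y_{E(P)}`.
-/

namespace IsLasserre

variable {α ι : Type*} [Fintype α] [DecidableEq α] {A : ι → α → ℝ} {b : ι → ℝ} {t : ℕ}
  {y : Finset α → ℝ}

theorem nonneg (hy : IsLasserre A b t y) {I : Finset α} (hI : I.card ≤ t + 1) : 0 ≤ y I := by
  simpa [momentMatrix] using hy.2.1.diag_nonneg (i := ⟨I, hI⟩)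

theorem nonneg_insert (hy : IsLasserre A b t y) (w : α) {I : Finset α} (hI : I.card ≤ t) :
    0 ≤ y (insert w I) :=
  hy.nonneg ((card_insert_le w I).trans (by omega))

theorem mul_le_sum_insert (hy : IsLasserre A b t y) (c : ι) {I : Finset α} (hI : I.card ≤ t) :
    b c * y I ≤ ∑ i, A c i * y (insert i I) := by
  have := (hy.2.2 c).diag_nonneg (i := ⟨I, hI⟩)
  simp only [momentMatrix, union_self, shiftVec] at this
  linarith

end IsLasserre

namespace DSTInstance

variable (G : DSTInstance V)

def outEdges (u : V) : Finset G.E := univ.filter fun e => e.1.1 = u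

def inEdges (v : V) : Finset G.E := univ.filter fun e => e.1.2 = v

def edgesIn (P : Finset (V × V)) : Finset G.E := univ.filter fun e => e.1 ∈ P

def capVar (e : G.E) : DSTVar G := Sum.inl e

def flowVar {s : V} (hs : s ∈ G.X) (e : G.E) : DSTVar G := Sum.inr ⟨(s, e.1), hs, e.2⟩

variable {G}

theorem level_r : G.level G.r = 0 := (G.level_root G.r).2 rfl

theorem level_of_mem_X {s : V} (hs : s ∈ G.X) : G.level s = G.levels :=
  (G.level_terminal s).2 hs

theorem snd_ne_r (e : G.E) : e.1.2 ≠ G.r := fun h => by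
  have := G.edge_level e.1 e.2
  rw [h, level_r] at this
  omega

theorem inEdges_r : G.inEdges G.r = ∅ :=
  filter_false_of_mem fun e _ => snd_ne_r e

theorem outEdges_eq_empty {v : V} (hv : G.level v = G.levels) : G.outEdges v = ∅ := by
  refine eq_empty_of_forall_notMem fun e he => ?_
  have h1 := G.edge_level e.1 e.2
  have h2 := G.level_le e.1.2
  simp only [outEdges, mem_filter, mem_univ, true_and] at he
  subst he
  omega

theorem edgeVars_eq (P : Finset (V × V)) : edgeVars G P = (G.edgesIn P).image G.capVar := rfl

@[simp] theorem mem_edgesIn {P : Finset (V × V)} {e : G.E} : e ∈ G.edgesIn P ↔ e.1 ∈ P := by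
  simp [edgesIn]

@[simp] theorem edgesIn_empty : G.edgesIn ∅ = ∅ := by ext; simp

theorem edgesIn_insert (e : G.E) (P : Finset (V × V)) :
    G.edgesIn (insert e.1 P) = insert e (G.edgesIn P) := by
  ext x; simp only [mem_edgesIn, mem_insert, Subtype.ext_iff]

theorem edgesIn_mono {P Q : Finset (V × V)} (h : P ⊆ Q) : G.edgesIn P ⊆ G.edgesIn Q :=
  fun _ he => mem_edgesIn.2 (h (mem_edgesIn.1 he))

theorem card_edgesIn_le (P : Finset (V × V)) : (G.edgesIn P).card ≤ P.card :=
  card_le_card_of_injOn Subtype.val (fun _ he => mem_edgesIn.1 he) Subtype.val_injective.injOn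

theorem sum_dstVar (f : DSTVar G → ℝ) :
    ∑ w, f w = ∑ e : G.E, f (G.capVar e) + ∑ q, f (Sum.inr q) :=
  Fintype.sum_sum_type f

theorem sum_ite_fst_eq {s : V} (hs : s ∈ G.X)
    (F : {p : V × (V × V) // p.1 ∈ G.X ∧ p.2 ∈ G.E} → ℝ) :
    ∑ q, (if q.1.1 = s then F q else 0) = ∑ e : G.E, F ⟨(s, e.1), hs, e.2⟩ := by
  rw [← sum_filter]
  refine sum_nbij' (fun q => ⟨q.1.2, q.2.2⟩) (fun e => ⟨(s, e.1), hs, e.2⟩) ?_ ?_ ?_ ?_ ?_ <;>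
    simp +contextual [Subtype.ext_iff, Prod.ext_iff]

end DSTInstance

namespace IsRPath

variable {G : DSTInstance V} {P : Finset (V × V)} {u v : V}

theorem level_snd_le (h : IsRPath G P v) : ∀ e ∈ P, G.level e.2 ≤ G.level v := by
  induction h with
  | nil => simp
  | @cons P u v _ he ih =>
    have := G.edge_level _ he
    intro e he'
    rcases mem_insert.1 he' with rfl | he'
    · exact le_rfl
    · have := ih e he'
      dsimp only at *
      omega

theorem notMem_of_mem_E (h : IsRPath G P u) (he : (u, v) ∈ G.E) : (u, v) ∉ P := fun hP => by
  have := h.level_snd_le _ hP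
  have := G.edge_level _ he
  dsimp only at *
  omega

theorem card_eq (h : IsRPath G P v) : P.card = G.level v := by
  induction h with
  | nil => simp [DSTInstance.level_r]
  | cons h he ih => rw [card_insert_of_notMem (h.notMem_of_mem_E he), ih, G.edge_level _ he]

theorem exists_last (h : IsRPath G P v) (hv : v ≠ G.r) :
    ∃ u P₀, IsRPath G P₀ u ∧ (u, v) ∈ G.E ∧ P = insert (u, v) P₀ := by
  cases h with
  | nil => exact absurd rfl hv
  | cons h he => exact ⟨_, _, h, he, rfl⟩

theorem eq_of_insert_eq {P₀ P₀' : Finset (V × V)} {u' : V} (h : IsRPath G P₀ u)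
    (h' : IsRPath G P₀' u') (he : (u, v) ∈ G.E) (he' : (u', v) ∈ G.E)
    (heq : insert (u, v) P₀ = insert (u', v) P₀') : u = u' ∧ P₀ = P₀' := by
  obtain rfl : u = u' := by
    have hmem : (u, v) ∈ insert (u', v) P₀' := heq ▸ mem_insert_self _ _
    rcases mem_insert.1 hmem with hmem | hmem
    · exact (Prod.ext_iff.1 hmem).1
    · have := h'.level_snd_le _ hmem
      have := G.edge_level _ he'
      dsimp only at *
      omega
  refine ⟨rfl, ?_⟩
  rw [← erase_insert (h.notMem_of_mem_E he), heq, erase_insert (h'.notMem_of_mem_E he')]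

end IsRPath

namespace DSTInstance

variable (G : DSTInstance V)

def flowVars {s : V} (hs : s ∈ G.X) (P : Finset (V × V)) : Finset (DSTVar G) :=
  (G.edgesIn P).image (G.flowVar hs)

open Classical in
noncomputable def rootedPaths (k : ℕ) : Finset (V × Finset (V × V)) :=
  univ.filter fun p => G.level p.1 = k ∧ IsRPath G p.2 p.1

variable {G} {s : V} {hs : s ∈ G.X}

@[simp] theorem flowVars_empty : G.flowVars hs ∅ = ∅ := by simp [flowVars]

theorem flowVars_insert (e : G.E) (P : Finset (V × V)) :
    G.flowVars hs (insert e.1 P) = insert (G.flowVar hs e) (G.flowVars hs P) := by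
  rw [flowVars, edgesIn_insert, image_insert, flowVars]

theorem flowVar_mem_flowVars {e : G.E} {P : Finset (V × V)} (h : e.1 ∈ P) :
    G.flowVar hs e ∈ G.flowVars hs P :=
  mem_image_of_mem _ (mem_edgesIn.2 h)

theorem card_flowVars_le (P : Finset (V × V)) : (G.flowVars hs P).card ≤ P.card :=
  card_image_le.trans (G.card_edgesIn_le P)

theorem card_union_flowVars_le (I : Finset (DSTVar G)) {P : Finset (V × V)} {v : V}
    (hP : IsRPath G P v) : (I ∪ G.flowVars hs P).card ≤ I.card + G.levels := by
  have := card_flowVars_le (hs := hs) P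
  have := G.level_le v
  have := card_union_le I (G.flowVars hs P)
  rw [hP.card_eq] at *
  omega

theorem mem_rootedPaths {k : ℕ} {p : V × Finset (V × V)} :
    p ∈ G.rootedPaths k ↔ G.level p.1 = k ∧ IsRPath G p.2 p.1 := by
  simp [rootedPaths]

theorem rootedPaths_zero : G.rootedPaths 0 = {(G.r, ∅)} := by
  ext ⟨v, P⟩
  simp only [mem_rootedPaths, G.level_root, mem_singleton, Prod.mk.injEq]
  constructor
  · rintro ⟨rfl, h⟩
    exact ⟨rfl, card_eq_zero.1 (h.card_eq.trans level_r)⟩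
  · rintro ⟨rfl, rfl⟩
    exact ⟨rfl, .nil⟩

theorem sum_rootedPaths_succ {β : Type*} [AddCommMonoid β] (k : ℕ) (f : Finset (V × V) → β) :
    ∑ p ∈ G.rootedPaths (k + 1), f p.2
      = ∑ p ∈ G.rootedPaths k, ∑ e ∈ G.outEdges p.1, f (insert e.1 p.2) := by
  rw [sum_sigma' (G.rootedPaths k) (fun p => G.outEdges p.1) fun p e => f (insert e.1 p.2)]
  symm
  refine sum_nbij (fun x => (x.2.1.2, insert x.2.1 x.1.2)) ?_ ?_ ?_ fun _ _ => rfl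
  · rintro ⟨⟨u, P₀⟩, e⟩ hx
    simp only [mem_sigma, mem_rootedPaths, outEdges, mem_filter, mem_univ, true_and] at hx ⊢
    obtain ⟨⟨rfl, hP₀⟩, rfl⟩ := hx
    exact ⟨G.edge_level _ e.2, hP₀.cons e.2⟩
  · rintro ⟨⟨u, P₀⟩, ⟨⟨a, v⟩, he⟩⟩ hx ⟨⟨u', P₀'⟩, ⟨⟨a', v'⟩, he'⟩⟩ hx' heq
    simp only [coe_sigma, Set.mem_sigma_iff, mem_coe, mem_rootedPaths, outEdges, mem_filter,
      mem_univ, true_and] at hx hx'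
    obtain ⟨⟨-, hP₀⟩, rfl⟩ := hx
    obtain ⟨⟨-, hP₀'⟩, rfl⟩ := hx'
    simp only [Prod.mk.injEq] at heq
    obtain ⟨rfl, hins⟩ := heq
    obtain ⟨rfl, rfl⟩ := hP₀.eq_of_insert_eq hP₀' he he' hins
    rfl
  · rintro ⟨v, P⟩ hp
    simp only [mem_coe, mem_rootedPaths] at hp
    obtain ⟨hv, hP⟩ := hp
    have hvr : v ≠ G.r := fun h => by simp [h, level_r] at hv
    obtain ⟨u, P₀, hP₀, he, rfl⟩ := hP.exists_last hvr
    refine ⟨⟨(u, P₀), ⟨(u, v), he⟩⟩, ?_, rfl⟩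
    have := G.edge_level _ he
    simp only [coe_sigma, Set.mem_sigma_iff, mem_coe, mem_rootedPaths, outEdges, mem_filter,
      mem_univ, true_and]
    exact ⟨⟨by dsimp only at this; omega, hP₀⟩, trivial⟩

open Classical in
theorem sum_rootedPaths_levels_eq {β : Type*} [AddCommMonoid β] (hs : s ∈ G.X)
    (f : Finset (V × V) → β) (hf : ∀ v P, IsRPath G P v → v ∈ G.X → v ≠ s → f P = 0) :
    ∑ p ∈ G.rootedPaths G.levels, f p.2 = ∑ P ∈ univ.filter (fun P => IsRPath G P s), f P := by
  rw [sum_finset_product' _ G.X (fun v => univ.filter (IsRPath G · v)) (f := fun _ P => f P)]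
  · exact sum_eq_single_of_mem s hs fun v hv hvs =>
      sum_eq_zero fun P hP => hf v P (mem_filter.1 hP).2 hv hvs
  · intro p
    simp [mem_rootedPaths, G.level_terminal]

end DSTInstance

namespace IsLasserre

open DSTInstance

section Constraints

variable {G : DSTInstance V} {t : ℕ} {Y : Finset (DSTVar G) → ℝ} {I : Finset (DSTVar G)}

theorem insert_le (hY : IsLasserre (dstA G) (dstb G) t Y) (w : DSTVar G) (hI : I.card ≤ t) :
    Y (insert w I) ≤ Y I := by
  have h := hY.mul_le_sum_insert (Sum.inr (Sum.inr (Sum.inr (w, false)))) hI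
  simp only [dstA, dstb, ite_mul, neg_mul, one_mul, zero_mul, sum_ite_eq', mem_univ, if_true,
    Bool.false_eq_true, if_false] at h
  linarith

theorem flowVar_le_capVar (hY : IsLasserre (dstA G) (dstb G) t Y) {s : V} (hs : s ∈ G.X)
    (e : G.E) (hI : I.card ≤ t) :
    Y (insert (G.flowVar hs e) I) ≤ Y (insert (G.capVar e) I) := by
  have h := hY.mul_le_sum_insert (Sum.inr (Sum.inl ⟨(s, e.1), hs, e.2⟩)) hI
  rw [sum_dstVar] at h
  simp only [dstA, dstb, capVar, Subtype.val_inj, ite_mul, one_mul, zero_mul,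
    neg_one_mul, sum_ite_eq', mem_univ, if_true] at h
  rw [Fintype.sum_eq_single ⟨(s, e.1), hs, e.2⟩ fun q hq => if_neg fun h => hq (Subtype.ext h),
    if_pos rfl] at h
  exact sub_nonneg.1 h

theorem sum_inEdges_capVar_le (hY : IsLasserre (dstA G) (dstb G) t Y) (v : V)
    (hI : I.card ≤ t) :
    ∑ e ∈ G.inEdges v, Y (insert (G.capVar e) I) ≤ Y I := by
  have h := hY.mul_le_sum_insert (Sum.inr (Sum.inr (Sum.inl v))) hI
  rw [sum_dstVar] at h
  simp only [dstA, dstb, capVar, ite_mul, zero_mul, sum_const_zero,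
    add_zero, ← sum_filter, sum_neg_distrib, neg_mul, one_mul, neg_le_neg_iff] at h
  exact h

theorem flow_conservation (hY : IsLasserre (dstA G) (dstb G) t Y) {s : V} (hs : s ∈ G.X)
    (v : V) (hI : I.card ≤ t) :
    ∑ e ∈ G.outEdges v, Y (insert (G.flowVar hs e) I)
      - ∑ e ∈ G.inEdges v, Y (insert (G.flowVar hs e) I)
      = (if v = G.r then 1 else if v = s then -1 else 0) * Y I := by
  set S := ∑ e ∈ G.outEdges v, Y (insert (G.flowVar hs e) I)
      - ∑ e ∈ G.inEdges v, Y (insert (G.flowVar hs e) I)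
  have row : ∀ d : Bool, ∑ w, dstA G (Sum.inl ((⟨s, hs⟩, v), d)) w * Y (insert w I)
      = (if d then 1 else -1) * S := by
    intro d
    simp only [sum_dstVar, dstA, capVar, zero_mul, sum_const_zero,
      zero_add, mul_assoc, ← mul_sum]
    congr 1
    simp only [ite_mul, zero_mul]
    rw [sum_ite_fst_eq hs]
    simp only [S, outEdges, inEdges, flowVar, sub_mul,
      ite_mul, one_mul, zero_mul, sum_sub_distrib, sum_filter]
  have hpos := hY.mul_le_sum_insert (Sum.inl ((⟨s, hs⟩, v), true)) hI
  have hneg := hY.mul_le_sum_insert (Sum.inl ((⟨s, hs⟩, v), false)) hI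
  rw [row] at hpos hneg
  simp only [dstb, if_true, Bool.false_eq_true, if_false, one_mul, neg_mul] at hpos hneg
  linarith

theorem apply_le_apply_of_subset (hY : IsLasserre (dstA G) (dstb G) t Y) {A B : Finset (DSTVar G)}
    (hAB : A ⊆ B) (hB : B.card ≤ t + 1) : Y B ≤ Y A := by
  induction B using Finset.strongInduction with
  | H B ih =>
    obtain rfl | hAB' := eq_or_ssubset_of_subset hAB
    · exact le_rfl
    obtain ⟨w, hwB, hwA⟩ := exists_of_ssubset hAB'
    have hcard : (B.erase w).card ≤ t := by rw [card_erase_of_mem hwB]; omega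
    calc Y B = Y (insert w (B.erase w)) := by rw [insert_erase hwB]
      _ ≤ Y (B.erase w) := hY.insert_le w hcard
      _ ≤ Y A := ih _ (erase_ssubset hwB) (subset_erase.2 ⟨hAB, hwA⟩) (by omega)

end Constraints

section Flows

variable {G : DSTInstance V} {t : ℕ} {Y : Finset (DSTVar G) → ℝ} {s : V} {hs : s ∈ G.X}
  {J : Finset (DSTVar G)}

/-- `hcap` says that `e₀` is bought in `J`: the indegree constraint at its head then leaves no
capacity, hence no flow, on the other edges entering it. -/
theorem sum_inEdges_flowVar_eq (hY : IsLasserre (dstA G) (dstb G) t Y) (hJ : J.card ≤ t)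
    {e₀ : G.E} (hcap : Y J ≤ Y (insert (G.capVar e₀) J)) :
    ∑ e ∈ G.inEdges e₀.1.2, Y (insert (G.flowVar hs e) J) = Y (insert (G.flowVar hs e₀) J) := by
  have he₀ : e₀ ∈ G.inEdges e₀.1.2 := by simp [inEdges]
  refine sum_eq_single_of_mem e₀ he₀ fun e he hne => ?_
  have hpair : Y (insert (G.capVar e₀) J) + Y (insert (G.capVar e) J)
      ≤ ∑ e ∈ G.inEdges e₀.1.2, Y (insert (G.capVar e) J) := by
    rw [← sum_pair (f := fun e => Y (insert (G.capVar e) J)) (Ne.symm hne)]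
    exact sum_le_sum_of_subset_of_nonneg (insert_subset he₀ (singleton_subset_iff.2 he))
      fun _ _ _ => hY.nonneg_insert _ hJ
  have := hY.sum_inEdges_capVar_le e₀.1.2 hJ
  have := hY.flowVar_le_capVar hs e hJ
  have := hY.nonneg_insert (G.flowVar hs e) hJ
  linarith

theorem sum_outEdges_flowVar_eq (hY : IsLasserre (dstA G) (dstb G) t Y) {P : Finset (V × V)}
    {u : V} (hP : IsRPath G P u) (hPJ : G.flowVars hs P ⊆ J) (hus : u ≠ s) (hJ : J.card ≤ t) :
    ∑ e ∈ G.outEdges u, Y (insert (G.flowVar hs e) J) = Y J := by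
  have hcons := hY.flow_conservation hs u hJ
  by_cases hur : u = G.r
  · subst hur
    rw [if_pos rfl, inEdges_r, sum_empty] at hcons
    linarith
  obtain ⟨u₀, P₀, -, he, rfl⟩ := hP.exists_last hur
  have hmem : G.flowVar hs ⟨(u₀, u), he⟩ ∈ J := hPJ (flowVar_mem_flowVars (mem_insert_self _ _))
  have hcap := hY.flowVar_le_capVar hs ⟨(u₀, u), he⟩ hJ
  rw [insert_eq_of_mem hmem] at hcap
  rw [if_neg hur, if_neg hus, zero_mul, hY.sum_inEdges_flowVar_eq hJ hcap,
    insert_eq_of_mem hmem] at hcons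
  linarith

theorem eq_zero_of_flowVars_subset (hY : IsLasserre (dstA G) (dstb G) t Y) {P : Finset (V × V)}
    {v : V} (hP : IsRPath G P v) (hv : v ∈ G.X) (hvs : v ≠ s) (hPJ : G.flowVars hs P ⊆ J)
    (hJ : J.card ≤ t) : Y J = 0 := by
  have hvr : v ≠ G.r := by
    rintro rfl
    have h0 : G.levels = 0 := (level_of_mem_X hv).symm.trans level_r
    exact hvs ((G.level_root s).1 (h0 ▸ level_of_mem_X hs)).symm
  obtain ⟨u, P₀, -, he, rfl⟩ := hP.exists_last hvr
  have hmem : G.flowVar hs ⟨(u, v), he⟩ ∈ J := hPJ (flowVar_mem_flowVars (mem_insert_self _ _))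
  have hcons := hY.flow_conservation hs v hJ
  rw [outEdges_eq_empty (level_of_mem_X hv), sum_empty, if_neg hvr, if_neg hvs, zero_mul] at hcons
  have hle := single_le_sum (fun e _ => hY.nonneg_insert (G.flowVar hs e) hJ)
    (show ⟨(u, v), he⟩ ∈ G.inEdges v by simp [inEdges])
  rw [insert_eq_of_mem hmem] at hle
  linarith [hY.nonneg (y := Y) (I := J) (by omega)]

theorem insert_flowVar_eq (hY : IsLasserre (dstA G) (dstb G) t Y) (hJ : J.card ≤ t) {e₀ : G.E}
    (hcap : G.capVar e₀ ∈ J)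
    (hout : e₀.1.2 = s ∨ ∃ e ∈ G.outEdges e₀.1.2, G.flowVar hs e ∈ J) :
    Y (insert (G.flowVar hs e₀) J) = Y J := by
  have hcons := hY.flow_conservation hs e₀.1.2 hJ
  rw [hY.sum_inEdges_flowVar_eq hJ (congrArg Y (insert_eq_of_mem hcap)).ge,
    if_neg (snd_ne_r e₀)] at hcons
  have := hY.insert_le (G.flowVar hs e₀) hJ
  by_cases hvs : e₀.1.2 = s
  · rw [if_pos hvs, outEdges_eq_empty (hvs ▸ level_of_mem_X hs), sum_empty] at hcons
    linarith
  obtain ⟨e, he, hmem⟩ := hout.resolve_left hvs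
  rw [if_neg hvs, zero_mul] at hcons
  have hle := single_le_sum (fun e _ => hY.nonneg_insert (G.flowVar hs e) hJ) he
  rw [insert_eq_of_mem hmem] at hle
  linarith

theorem union_flowVars_eq (hY : IsLasserre (dstA G) (dstb G) t Y) {P : Finset (V × V)} {v : V}
    (hP : IsRPath G P v) (J : Finset (DSTVar G)) (hJ : J.card + P.card ≤ t)
    (hcap : (G.edgesIn P).image G.capVar ⊆ J)
    (hout : v = s ∨ ∃ e ∈ G.outEdges v, G.flowVar hs e ∈ J) :
    Y (J ∪ G.flowVars hs P) = Y J := by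
  induction hP generalizing J with
  | nil => simp
  | @cons P u v hP he ih =>
    let e : G.E := ⟨(u, v), he⟩
    rw [card_insert_of_notMem (hP.notMem_of_mem_E he)] at hJ
    rw [show insert (u, v) P = insert e.1 P from rfl, edgesIn_insert, image_insert,
      insert_subset_iff] at hcap
    have hstep : Y (insert (G.flowVar hs e) J) = Y J := hY.insert_flowVar_eq (by omega) hcap.1 hout
    rw [show insert (u, v) P = insert e.1 P from rfl, flowVars_insert, union_insert,
      ← insert_union, ih _ (by grind [card_insert_le]) (hcap.2.trans (subset_insert _ _))
        (.inr ⟨e, by simp [outEdges, e], mem_insert_self _ _⟩), hstep]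

theorem union_image_flowVar_le (hY : IsLasserre (dstA G) (dstb G) t Y) (S : Finset G.E)
    {I : Finset (DSTVar G)} (hI : I.card + S.card ≤ t) :
    Y (I ∪ S.image (G.flowVar hs)) ≤ Y (I ∪ S.image G.capVar) := by
  induction S using Finset.induction_on generalizing I with
  | empty => simp
  | insert e S he ih =>
    rw [card_insert_of_notMem he] at hI
    have hcard : (I ∪ S.image (G.flowVar hs)).card ≤ t :=
      (card_union_le _ _).trans (by grind [card_image_le])
    calc Y (I ∪ (insert e S).image (G.flowVar hs))
        = Y (insert (G.flowVar hs e) (I ∪ S.image (G.flowVar hs))) := by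
          rw [image_insert, union_insert]
      _ ≤ Y (insert (G.capVar e) I ∪ S.image (G.flowVar hs)) := by
          rw [insert_union]; exact hY.flowVar_le_capVar hs e hcard
      _ ≤ Y (insert (G.capVar e) I ∪ S.image G.capVar) := ih (by grind [card_insert_le])
      _ = Y (I ∪ (insert e S).image G.capVar) := by rw [image_insert, union_insert, insert_union]

theorem sum_rootedPaths_flowVars_eq (hY : IsLasserre (dstA G) (dstb G) t Y)
    {I : Finset (DSTVar G)} (hI : I.card + G.levels ≤ t) {k : ℕ} (hk : k ≤ G.levels) :
    ∑ p ∈ G.rootedPaths k, Y (I ∪ G.flowVars hs p.2) = Y I := by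
  induction k with
  | zero => simp [rootedPaths_zero]
  | succ k ih =>
    rw [sum_rootedPaths_succ (f := fun P => Y (I ∪ G.flowVars hs P)), ← ih (by omega)]
    refine sum_congr rfl fun p hp => ?_
    obtain ⟨hu, hP⟩ := mem_rootedPaths.1 hp
    have hus : p.1 ≠ s := fun h => by rw [h, level_of_mem_X hs] at hu; omega
    simp only [flowVars_insert, union_insert]
    exact hY.sum_outEdges_flowVar_eq hP subset_union_right hus
      ((card_union_flowVars_le I hP).trans hI)

open Classical in
theorem sum_paths_flowVars_eq (hY : IsLasserre (dstA G) (dstb G) t Y) (hs : s ∈ G.X)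
    {I : Finset (DSTVar G)} (hI : I.card + G.levels ≤ t) :
    ∑ P ∈ univ.filter (fun P => IsRPath G P s), Y (I ∪ G.flowVars hs P) = Y I := by
  rw [← sum_rootedPaths_levels_eq hs _ fun v P hP hv hvs => hY.eq_zero_of_flowVars_subset hP hv hvs
    subset_union_right ((card_union_flowVars_le I hP).trans hI)]
  exact hY.sum_rootedPaths_flowVars_eq hI le_rfl

open Classical in
theorem sum_paths_superset_le (hY : IsLasserre (dstA G) (dstb G) t Y) (ht : 2 * G.levels ≤ t)
    (hs : s ∈ G.X) {P' : Finset (V × V)} {v : V} (hP' : IsRPath G P' v) :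
    ∑ P ∈ univ.filter (fun P => IsRPath G P s ∧ P' ⊆ P), Y (edgeVars G P)
      ≤ Y (edgeVars G P') := by
  have hcard : ∀ {P : Finset (V × V)} {w : V}, IsRPath G P w → (edgeVars G P).card ≤ G.levels :=
    fun hP => card_image_le.trans ((card_edgesIn_le _).trans (hP.card_eq ▸ G.level_le _))
  have := hcard hP'
  calc ∑ P ∈ univ.filter (fun P => IsRPath G P s ∧ P' ⊆ P), Y (edgeVars G P)
      ≤ ∑ P ∈ univ.filter (fun P => IsRPath G P s ∧ P' ⊆ P),
          Y (edgeVars G P' ∪ G.flowVars hs P) := by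
        refine sum_le_sum fun P hP => ?_
        obtain ⟨hPs, hP'P⟩ := (mem_filter.1 hP).2
        have := hcard hPs
        have := hPs.card_eq ▸ G.level_le s
        rw [← hY.union_flowVars_eq (hs := hs) hPs (edgeVars G P) (by omega) subset_rfl (.inl rfl)]
        exact hY.apply_le_apply_of_subset (union_subset_union (image_subset_image (edgesIn_mono hP'P))
          subset_rfl) ((card_union_flowVars_le _ hPs).trans (by omega))
    _ ≤ ∑ P ∈ univ.filter (fun P => IsRPath G P s), Y (edgeVars G P' ∪ G.flowVars hs P) :=
        sum_le_sum_of_subset_of_nonneg (monotone_filter_right _ fun _ _ h => h.1) fun P hP _ =>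
          hY.nonneg ((card_union_flowVars_le _ (mem_filter.1 hP).2).trans (by omega))
    _ = Y (edgeVars G P') := hY.sum_paths_flowVars_eq hs (by omega)

end Flows

end IsLasserre

open Classical in
/-- For a level-`2ℓ` Lasserre solution `Y` of the Directed Steiner Tree LP on an `ℓ`-level
graph and a terminal `s`: (a) `Σ_{P ∈ Q(s)} y_P = 1`; (b) for every vertex `v` and every
`r`–`v` path `P'`, `Σ_{P ∈ Q(s) : P' ⊆ P} y_P ≤ y_{P'}`. -/
theorem sum_paths_to_terminal (G : DSTInstance V) (Y : Finset (DSTVar G) → ℝ)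
    (hY : IsLasserre (dstA G) (dstb G) (2 * G.levels) Y)
    (s : V) (hs : s ∈ G.X) :
    (∑ P ∈ Finset.univ.filter (fun P : Finset (V × V) => IsRPath G P s),
        Y (edgeVars G P)) = 1 ∧
    ∀ (v : V) (P' : Finset (V × V)), IsRPath G P' v →
      ∑ P ∈ Finset.univ.filter (fun P : Finset (V × V) => IsRPath G P s ∧ P' ⊆ P),
        Y (edgeVars G P) ≤ Y (edgeVars G P') := by
  have hb := fun v P' (hP' : IsRPath G P' v) => hY.sum_paths_superset_le le_rfl hs hP'
  refine ⟨le_antisymm ?_ ?_, hb⟩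
  · simpa [DSTInstance.edgeVars_eq, hY.1] using hb G.r ∅ .nil
  · calc 1 = ∑ P ∈ univ.filter (fun P => IsRPath G P s), Y (∅ ∪ G.flowVars hs P) := by
          rw [hY.sum_paths_flowVars_eq hs (by rw [card_empty]; omega), hY.1]
      _ ≤ ∑ P ∈ univ.filter (fun P => IsRPath G P s), Y (∅ ∪ edgeVars G P) :=
          sum_le_sum fun P hP => hY.union_image_flowVar_le _ <| by
            have := G.card_edgesIn_le P
            have := (mem_filter.1 hP).2.card_eq
            have := G.level_le s
            simp only [card_empty]
            omega
      _ = _ := by simp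
end
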